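/- arXiv:2604.21256 — 4 statements merged into one kernel-verified Lean document; each statement's English description precedes it below -/
import Mathlib

section
/- Soundness and convergence of Robust Interval Search with an exact inner evaluation (Theorems 5.3 and 6.5, generic form): let m : ℝ → ℝ be antitone on [0,1] (for 0 ≤ δ ≤ δ' ≤ 1, m δ' ≤ m δ) with m 0 = V₀, let Δ ≥ 0, define f(δ) = V₀ − Δ − m(δ), let a, b be the modified bisection sequences for f, and set δ* = sSup {δ ∈ [0,1] | f δ ≤ 0}. Then for every N ∈ ℕ, the returned value a N satisfies m (a N) ≥ V₀ − Δ (the worst-case value at radius a N meets the threshold) and 0 ≤ δ* − a N ≤ 2^{−N}. -/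
open Classical in
/-- The modified bisection sequences `(a n, b n)` for `f : ℝ → ℝ`:
`a 0 = 0`, `b 0 = 1`, and at each step, with `c = (a n + b n)/2`,
if `f c ≤ 0` then `a (n+1) = c, b (n+1) = b n`, otherwise `a (n+1) = a n, b (n+1) = c`. -/
noncomputable def mbs (f : ℝ → ℝ) : ℕ → ℝ × ℝ
  | 0 => (0, 1)
  | n + 1 =>
    let p := mbs f n
    let c := (p.1 + p.2) / 2
    if f c ≤ 0 then (c, p.2) else (p.1, c)

/-- The lower sequence of modified bisection search. -/
noncomputable def mbsA (f : ℝ → ℝ) (n : ℕ) : ℝ := (mbs f n).1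

/-- Soundness and convergence of Robust Interval Search with an exact inner evaluation
(Theorems 5.3 and 6.5, generic form): for `m` antitone on `[0,1]` with `m 0 = V₀`,
`Δ ≥ 0`, `f δ = V₀ − Δ − m δ`, and `δ* = sSup {δ ∈ [0,1] | f δ ≤ 0}`, the value `a N`
returned by modified bisection after any `N` iterations satisfies `m (a N) ≥ V₀ − Δ`
and `0 ≤ δ* − a N ≤ 2^{−N}`. -/
theorem ris_sound_and_converges (m : ℝ → ℝ)
    (hanti : ∀ δ δ' : ℝ, 0 ≤ δ → δ ≤ δ' → δ' ≤ 1 → m δ' ≤ m δ)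
    (V₀ : ℝ) (hm0 : m 0 = V₀) (Δ : ℝ) (hΔ : 0 ≤ Δ)
    (f : ℝ → ℝ) (hf : ∀ δ, f δ = V₀ - Δ - m δ) :
    ∀ N : ℕ,
      m (mbsA f N) ≥ V₀ - Δ ∧
      0 ≤ sSup {δ : ℝ | δ ∈ Set.Icc (0:ℝ) 1 ∧ f δ ≤ 0} - mbsA f N ∧
      sSup {δ : ℝ | δ ∈ Set.Icc (0:ℝ) 1 ∧ f δ ≤ 0} - mbsA f N ≤ (1/2 : ℝ) ^ N := by
  intro N
  set S : Set ℝ := {δ : ℝ | δ ∈ Set.Icc (0:ℝ) 1 ∧ f δ ≤ 0} with hS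
  have hf0 : f 0 ≤ 0 := by rw [hf, hm0]; linarith
  have h0S : (0:ℝ) ∈ S := ⟨⟨le_refl 0, zero_le_one⟩, hf0⟩
  have inv : ∀ n : ℕ, 0 ≤ (mbs f n).1 ∧ (mbs f n).1 ≤ (mbs f n).2 ∧
      (mbs f n).2 ≤ 1 ∧ f (mbs f n).1 ≤ 0 ∧ (∀ x ∈ S, x ≤ (mbs f n).2) ∧
      (mbs f n).2 - (mbs f n).1 = (1/2 : ℝ) ^ n := by
    intro n
    induction n with
    | zero =>
      have h0 : mbs f 0 = (0, 1) := rfl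
      rw [h0]
      refine ⟨le_refl 0, zero_le_one, le_refl 1, hf0, ?_, by norm_num⟩
      intro x hx; exact hx.1.2
    | succ n ih =>
      obtain ⟨ha0, hab, hb1, hfa, hub, hlen⟩ := ih
      set a := (mbs f n).1 with hha
      set b := (mbs f n).2 with hhb
      have hac : a ≤ (a + b) / 2 := by linarith
      have hcb : (a + b) / 2 ≤ b := by linarith
      have hstep : mbs f (n + 1)
          = if f ((a + b) / 2) ≤ 0 then ((a + b) / 2, b) else (a, (a + b) / 2) := rfl
      rw [hstep]
      by_cases hc : f ((a + b) / 2) ≤ 0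
      · rw [if_pos hc]
        exact ⟨by linarith, hcb, hb1, hc, hub, by rw [pow_succ]; linarith⟩
      · rw [if_neg hc]
        refine ⟨ha0, hac, by linarith, hfa, ?_, by rw [pow_succ]; linarith⟩
        intro x hx
        by_contra hxc
        push_neg at hxc
        obtain ⟨⟨hx0, hx1⟩, hxf⟩ := hx
        have h1 : m x ≤ m ((a + b) / 2) := hanti _ _ (by linarith) hxc.le hx1
        have h2 : f ((a + b) / 2) ≤ f x := by rw [hf, hf]; linarith
        exact hc (h2.trans hxf)
  obtain ⟨ha0, hab, hb1, hfa, hub, hlen⟩ := inv N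
  have haS : mbsA f N ∈ S := ⟨⟨ha0, le_trans hab hb1⟩, hfa⟩
  have hbdd : BddAbove S := ⟨1, fun x hx => hx.1.2⟩
  have hle : mbsA f N ≤ sSup S := le_csSup hbdd haS
  have hsb : sSup S ≤ (mbs f N).2 := csSup_le ⟨0, h0S⟩ hub
  refine ⟨?_, by linarith, by simp only [mbsA] at *; linarith⟩
  have := hfa
  rw [hf] at this
  simp only [mbsA]; linarith
end

section
/- The node-based robust Bellman backup is a γ-contraction (appendix of Theorem 6.1): for all V₁, V₂ : S × N → ℝ and all (s, n) ∈ S × N, |(B_n V₁)(s,n) − (B_n V₂)(s,n)| ≤ γ · (sup over (s',n') of |V₁(s',n') − V₂(s',n')|); hence ‖B_n V₁ − B_n V₂‖_∞ ≤ γ ‖V₁ − V₂‖_∞. -/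
/-- The node-based robust Bellman operator: `(B_n V)(s, n) = R s (α n) +
γ · inf over Z̃ ∈ D n of ∑_{s'} T s (α n) s' · ∑_o Z̃ s' o · V (s', T_FSC n o)`. -/
noncomputable def nodeBellman {S N O A : Type*} [Fintype S] [Fintype O]
    (α : N → A) (TFSC : N → O → N) (T : S → A → S → ℝ) (R : S → A → ℝ) (γ : ℝ)
    (D : N → Set (S → O → ℝ)) (V : S × N → ℝ) : S × N → ℝ :=
  fun p =>
    R p.1 (α p.2) + γ * sInf
      ((fun Z => ∑ s', T p.1 (α p.2) s' * ∑ o, Z s' o * V (s', TFSC p.2 o)) '' D p.2)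

lemma comb_abs_le {S O : Type*} [Fintype S] [Fintype O]
    (t : S → ℝ) (ht0 : ∀ s', t s' ≥ 0) (ht1 : ∑ s', t s' = 1)
    (Z : S → O → ℝ) (hZ0 : ∀ s' o, Z s' o ≥ 0) (hZ1 : ∀ s', ∑ o, Z s' o = 1)
    (w : S → O → ℝ) (B : ℝ) (hw : ∀ s' o, |w s' o| ≤ B) :
    |∑ s', t s' * ∑ o, Z s' o * w s' o| ≤ B := by
  calc |∑ s', t s' * ∑ o, Z s' o * w s' o|
      ≤ ∑ s', |t s' * ∑ o, Z s' o * w s' o| := Finset.abs_sum_le_sum_abs _ _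
    _ ≤ ∑ s', t s' * B := by
        apply Finset.sum_le_sum
        intro s' _
        rw [abs_mul, abs_of_nonneg (ht0 s')]
        refine mul_le_mul_of_nonneg_left ?_ (ht0 s')
        calc |∑ o, Z s' o * w s' o| ≤ ∑ o, |Z s' o * w s' o| :=
              Finset.abs_sum_le_sum_abs _ _
          _ ≤ ∑ o, Z s' o * B := by
              apply Finset.sum_le_sum; intro o _
              rw [abs_mul, abs_of_nonneg (hZ0 s' o)]
              exact mul_le_mul_of_nonneg_left (hw s' o) (hZ0 s' o)
          _ = B := by rw [← Finset.sum_mul, hZ1 s', one_mul]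
    _ = B := by rw [← Finset.sum_mul, ht1, one_mul]

lemma sInf_sub_le_of_le {ι : Type*} {D : Set ι} (hD : D.Nonempty)
    {f g : ι → ℝ} {M : ℝ} (hbf : BddBelow (f '' D))
    (hfg : ∀ z ∈ D, f z ≤ g z + M) :
    sInf (f '' D) - sInf (g '' D) ≤ M := by
  rw [sub_le_iff_le_add, add_comm]
  have h : ∀ y ∈ g '' D, sInf (f '' D) - M ≤ y := by
    rintro y ⟨z, hz, rfl⟩
    have h1 : sInf (f '' D) ≤ f z := csInf_le hbf ⟨z, hz, rfl⟩
    linarith [hfg z hz]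
  have := le_csInf (hD.image g) h
  linarith

/-- The node-based robust Bellman backup is a γ-contraction (appendix of Theorem 6.1):
for all `V₁, V₂` and all `(s, n)`,
`|(B_n V₁)(s,n) − (B_n V₂)(s,n)| ≤ γ · sup_{(s',n')} |V₁(s',n') − V₂(s',n')|`;
hence `‖B_n V₁ − B_n V₂‖_∞ ≤ γ ‖V₁ − V₂‖_∞`. -/
theorem nodeBellman_contraction {S N O A : Type*}
    [Fintype S] [Fintype N] [Fintype O] [Fintype A]
    [Nonempty S] [Nonempty N]
    (α : N → A) (TFSC : N → O → N) (T : S → A → S → ℝ)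
    (hTnonneg : ∀ s a s', T s a s' ≥ 0) (hTsum : ∀ s a, ∑ s', T s a s' = 1)
    (R : S → A → ℝ) (γ : ℝ) (hγ0 : 0 ≤ γ) (hγ1 : γ < 1)
    (D : N → Set (S → O → ℝ)) (hDne : ∀ n, (D n).Nonempty)
    (hDprob : ∀ n, ∀ Z ∈ D n, (∀ s' o, Z s' o ≥ 0) ∧ ∀ s', ∑ o, Z s' o = 1)
    (V₁ V₂ : S × N → ℝ) :
    (∀ p : S × N,
      |nodeBellman α TFSC T R γ D V₁ p - nodeBellman α TFSC T R γ D V₂ p| ≤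
        γ * ⨆ q : S × N, |V₁ q - V₂ q|) ∧
    (⨆ p : S × N,
      |nodeBellman α TFSC T R γ D V₁ p - nodeBellman α TFSC T R γ D V₂ p|) ≤
        γ * ⨆ q : S × N, |V₁ q - V₂ q| := by
  have hbddM : BddAbove (Set.range fun q : S × N => |V₁ q - V₂ q|) :=
    (Set.finite_range _).bddAbove
  set M := ⨆ q : S × N, |V₁ q - V₂ q| with hMdef
  have hM : ∀ q, |V₁ q - V₂ q| ≤ M := fun q => le_ciSup hbddM q
  have key : ∀ p : S × N,
      |nodeBellman α TFSC T R γ D V₁ p - nodeBellman α TFSC T R γ D V₂ p| ≤ γ * M := by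
    rintro ⟨s, n⟩
    set f := fun Z : S → O → ℝ =>
      ∑ s', T s (α n) s' * ∑ o, Z s' o * V₁ (s', TFSC n o) with hf
    set g := fun Z : S → O → ℝ =>
      ∑ s', T s (α n) s' * ∑ o, Z s' o * V₂ (s', TFSC n o) with hg
    have hdiff : ∀ Z ∈ D n,
        f Z - g Z = ∑ s', T s (α n) s' *
          ∑ o, Z s' o * (V₁ (s', TFSC n o) - V₂ (s', TFSC n o)) := by
      intro Z _
      rw [hf, hg, ← Finset.sum_sub_distrib]
      refine Finset.sum_congr rfl fun s' _ => ?_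
      rw [← mul_sub, ← Finset.sum_sub_distrib]
      congr 1
      exact Finset.sum_congr rfl fun o _ => (mul_sub _ _ _).symm
    have hfg : ∀ Z ∈ D n, |f Z - g Z| ≤ M := by
      intro Z hZ
      obtain ⟨hZ0, hZ1⟩ := hDprob n Z hZ
      rw [hdiff Z hZ]
      exact comb_abs_le _ (fun s' => hTnonneg s (α n) s') (hTsum s (α n)) Z hZ0 hZ1
        _ M (fun s' o => hM _)
    have hbW : ∀ (W : S × N → ℝ), BddBelow
        ((fun Z : S → O → ℝ =>
          ∑ s', T s (α n) s' * ∑ o, Z s' o * W (s', TFSC n o)) '' D n) := by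
      intro W
      have hbb : BddAbove (Set.range fun q : S × N => |W q|) :=
        (Set.finite_range _).bddAbove
      refine ⟨-(⨆ q : S × N, |W q|), ?_⟩
      rintro y ⟨Z, hZ, rfl⟩
      obtain ⟨hZ0, hZ1⟩ := hDprob n Z hZ
      have := comb_abs_le _ (fun s' => hTnonneg s (α n) s') (hTsum s (α n)) Z hZ0 hZ1
        (fun s' o => W (s', TFSC n o)) _ (fun s' o => le_ciSup hbb (s', TFSC n o))
      exact neg_le_of_abs_le this
    have h1 : sInf (f '' D n) - sInf (g '' D n) ≤ M :=
      sInf_sub_le_of_le (hDne n) (hbW V₁) fun z hz => by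
        have := (abs_le.mp (hfg z hz)).2; linarith
    have h2 : sInf (g '' D n) - sInf (f '' D n) ≤ M :=
      sInf_sub_le_of_le (hDne n) (hbW V₂) fun z hz => by
        have := (abs_le.mp (hfg z hz)).1; linarith
    have habs : |sInf (f '' D n) - sInf (g '' D n)| ≤ M := abs_sub_le_iff.mpr ⟨h1, h2⟩
    have hrw : nodeBellman α TFSC T R γ D V₁ (s, n) - nodeBellman α TFSC T R γ D V₂ (s, n)
        = γ * (sInf (f '' D n) - sInf (g '' D n)) := by
      simp only [nodeBellman, hf, hg]; ring
    rw [hrw, abs_mul, abs_of_nonneg hγ0]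
    exact mul_le_mul_of_nonneg_left habs hγ0
  exact ⟨key, ciSup_le key⟩
end

section
/- Existence and uniqueness of the robust value function and convergence of robust value iteration (appendix of Theorem 6.1, via the Banach fixed-point theorem): there exists a unique V* : S × N → ℝ with B_n V* = V*, and for every V₀ : S × N → ℝ the iterates B_n^k V₀ converge to V* as k → ∞ (in the sup metric on functions S × N → ℝ). -/
open Filter

private lemma abs_sInf_sub_sInf_le {ι : Type*} {D : Set ι} (hD : D.Nonempty)
    {f g : ι → ℝ} {c : ℝ} (hf : BddBelow (f '' D)) (hg : BddBelow (g '' D))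
    (h : ∀ z ∈ D, |f z - g z| ≤ c) :
    |sInf (f '' D) - sInf (g '' D)| ≤ c := by
  have key : ∀ (f g : ι → ℝ), BddBelow (f '' D) →
      (∀ z ∈ D, f z - g z ≤ c) → sInf (f '' D) - sInf (g '' D) ≤ c := by
    intro f g hf h
    have : sInf (f '' D) - c ≤ sInf (g '' D) := by
      refine le_csInf (hD.image g) ?_
      rintro b ⟨z, hz, rfl⟩
      have h1 : sInf (f '' D) ≤ f z := csInf_le hf ⟨z, hz, rfl⟩
      have h2 := h z hz
      linarith
    linarith
  rw [abs_sub_le_iff]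
  refine ⟨key f g hf fun z hz => ?_, key g f hg fun z hz => ?_⟩
  · exact (le_abs_self _).trans (h z hz)
  · have := h z hz
    rw [abs_sub_comm] at this
    exact (le_abs_self _).trans this

/-- Existence and uniqueness of the robust value function and convergence of robust value
iteration (appendix of Theorem 6.1, via the Banach fixed-point theorem): there is a unique
`V*` with `B_n V* = V*`, and for every `V₀` the iterates `B_n^[k] V₀` converge to `V*`. -/
theorem nodeBellman_fixed_point {S N O A : Type*}
    [Fintype S] [Fintype N] [Fintype O] [Fintype A]
    [Nonempty S] [Nonempty N]
    (α : N → A) (TFSC : N → O → N) (T : S → A → S → ℝ)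
    (hTnonneg : ∀ s a s', T s a s' ≥ 0) (hTsum : ∀ s a, ∑ s', T s a s' = 1)
    (R : S → A → ℝ) (γ : ℝ) (hγ0 : 0 ≤ γ) (hγ1 : γ < 1)
    (D : N → Set (S → O → ℝ)) (hDne : ∀ n, (D n).Nonempty)
    (hDprob : ∀ n, ∀ Z ∈ D n, (∀ s' o, Z s' o ≥ 0) ∧ ∀ s', ∑ o, Z s' o = 1) :
    ∃ Vstar : S × N → ℝ,
      nodeBellman α TFSC T R γ D Vstar = Vstar ∧
      (∀ W : S × N → ℝ, nodeBellman α TFSC T R γ D W = W → W = Vstar) ∧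
      ∀ V₀ : S × N → ℝ,
        Tendsto (fun k => (nodeBellman α TFSC T R γ D)^[k] V₀) atTop (nhds Vstar) := by
  set B := nodeBellman α TFSC T R γ D with hB
  -- boundedness of the image sets
  have hbdd : ∀ (V : S × N → ℝ) (s : S) (n : N),
      BddBelow ((fun Z => ∑ s', T s (α n) s' * ∑ o, Z s' o * V (s', TFSC n o)) '' D n) := by
    intro V s n
    refine ⟨-(∑ p : S × N, |V p|), ?_⟩
    rintro b ⟨Z, hZ, rfl⟩
    obtain ⟨hZ0, hZ1⟩ := hDprob n Z hZ
    set M := ∑ p : S × N, |V p| with hM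
    have hVleM : ∀ p : S × N, |V p| ≤ M :=
      fun p => Finset.single_le_sum (fun q _ => abs_nonneg (V q)) (Finset.mem_univ p)
    have habs : |∑ s', T s (α n) s' * ∑ o, Z s' o * V (s', TFSC n o)| ≤ M := by
      calc |∑ s', T s (α n) s' * ∑ o, Z s' o * V (s', TFSC n o)|
          ≤ ∑ s', |T s (α n) s' * ∑ o, Z s' o * V (s', TFSC n o)| :=
            Finset.abs_sum_le_sum_abs _ _
        _ ≤ ∑ s', T s (α n) s' * M := by
            refine Finset.sum_le_sum fun s' _ => ?_
            rw [abs_mul, abs_of_nonneg (hTnonneg s (α n) s')]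
            refine mul_le_mul_of_nonneg_left ?_ (hTnonneg s (α n) s')
            calc |∑ o, Z s' o * V (s', TFSC n o)|
                ≤ ∑ o, |Z s' o * V (s', TFSC n o)| := Finset.abs_sum_le_sum_abs _ _
              _ ≤ ∑ o, Z s' o * M := by
                  refine Finset.sum_le_sum fun o _ => ?_
                  rw [abs_mul, abs_of_nonneg (hZ0 s' o)]
                  exact mul_le_mul_of_nonneg_left (hVleM _) (hZ0 s' o)
              _ = M := by rw [← Finset.sum_mul, hZ1, one_mul]
        _ = M := by rw [← Finset.sum_mul, hTsum, one_mul]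
    linarith [neg_abs_le (∑ s', T s (α n) s' * ∑ o, Z s' o * V (s', TFSC n o))]
  have hdistle : ∀ V W : S × N → ℝ, dist (B V) (B W) ≤ γ * dist V W := by
    intro V W
    have hc : 0 ≤ γ * dist V W := mul_nonneg hγ0 dist_nonneg
    rw [dist_pi_le_iff hc]
    rintro ⟨s, n⟩
    simp only [hB, nodeBellman, Real.dist_eq]
    rw [add_sub_add_left_eq_sub, ← mul_sub, abs_mul, abs_of_nonneg hγ0]
    refine mul_le_mul_of_nonneg_left ?_ hγ0
    refine abs_sInf_sub_sInf_le (hDne n) (hbdd V s n) (hbdd W s n) fun Z hZ => ?_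
    obtain ⟨hZ0, hZ1⟩ := hDprob n Z hZ
    have hd : ∀ p : S × N, |V p - W p| ≤ dist V W := by
      intro p
      rw [← Real.dist_eq]
      exact dist_le_pi_dist V W p
    calc |(∑ s', T s (α n) s' * ∑ o, Z s' o * V (s', TFSC n o)) -
          ∑ s', T s (α n) s' * ∑ o, Z s' o * W (s', TFSC n o)|
        = |∑ s', T s (α n) s' * ∑ o, Z s' o * (V (s', TFSC n o) - W (s', TFSC n o))| := by
          rw [← Finset.sum_sub_distrib]
          congr 1
          refine Finset.sum_congr rfl fun s' _ => ?_
          rw [← mul_sub, ← Finset.sum_sub_distrib]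
          congr 1
          exact Finset.sum_congr rfl fun o _ => by ring
      _ ≤ ∑ s', |T s (α n) s' * ∑ o, Z s' o * (V (s', TFSC n o) - W (s', TFSC n o))| :=
          Finset.abs_sum_le_sum_abs _ _
      _ ≤ ∑ s', T s (α n) s' * dist V W := by
          refine Finset.sum_le_sum fun s' _ => ?_
          rw [abs_mul, abs_of_nonneg (hTnonneg s (α n) s')]
          refine mul_le_mul_of_nonneg_left ?_ (hTnonneg s (α n) s')
          calc |∑ o, Z s' o * (V (s', TFSC n o) - W (s', TFSC n o))|
              ≤ ∑ o, |Z s' o * (V (s', TFSC n o) - W (s', TFSC n o))| :=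
                Finset.abs_sum_le_sum_abs _ _
            _ ≤ ∑ o, Z s' o * dist V W := by
                refine Finset.sum_le_sum fun o _ => ?_
                rw [abs_mul, abs_of_nonneg (hZ0 s' o)]
                exact mul_le_mul_of_nonneg_left (hd _) (hZ0 s' o)
            _ = dist V W := by rw [← Finset.sum_mul, hZ1, one_mul]
      _ = dist V W := by rw [← Finset.sum_mul, hTsum, one_mul]
  set γ' : NNReal := ⟨γ, hγ0⟩ with hγ'
  have hcontr : ContractingWith γ' B := by
    constructor
    · exact_mod_cast hγ1
    · exact LipschitzWith.of_dist_le_mul hdistle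
  refine ⟨ContractingWith.fixedPoint B hcontr, hcontr.fixedPoint_isFixedPt, ?_, ?_⟩
  · intro W hW
    exact hcontr.fixedPoint_unique hW
  · intro V₀
    exact hcontr.tendsto_iterate_fixedPoint V₀
end

section
/- Equivalence of history-dependent and node-dependent worst-case values, infinite horizon (Theorem 6.1, infinite-horizon part): suppose V̂∞ : S × List O → ℝ is bounded and satisfies B_h V̂∞ = V̂∞, and Ṽ∞ : S × N → ℝ satisfies B_n Ṽ∞ = Ṽ∞. Then V̂∞(s, h) = Ṽ∞(s, n_h h) for every state s ∈ S and every history h : List O. -/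
lemma weighted_abs_le {S O : Type*} [Fintype S] [Fintype O] (T : S → ℝ)
    (hT : ∀ s, 0 ≤ T s) (hTs : ∑ s, T s = 1) (Z : S → O → ℝ)
    (hZ : ∀ s o, 0 ≤ Z s o) (hZs : ∀ s, ∑ o, Z s o = 1)
    (W : S → O → ℝ) (M : ℝ) (hW : ∀ s o, |W s o| ≤ M) :
    |∑ s, T s * ∑ o, Z s o * W s o| ≤ M := by
  have hinner : ∀ s, |∑ o, Z s o * W s o| ≤ M := by
    intro s
    calc |∑ o, Z s o * W s o| ≤ ∑ o, |Z s o * W s o| := Finset.abs_sum_le_sum_abs _ _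
      _ ≤ ∑ o, Z s o * M := by
          apply Finset.sum_le_sum
          intro o _
          rw [abs_mul, abs_of_nonneg (hZ s o)]
          exact mul_le_mul_of_nonneg_left (hW s o) (hZ s o)
      _ = M := by rw [← Finset.sum_mul, hZs s, one_mul]
  calc |∑ s, T s * ∑ o, Z s o * W s o| ≤ ∑ s, |T s * ∑ o, Z s o * W s o| :=
        Finset.abs_sum_le_sum_abs _ _
    _ ≤ ∑ s, T s * M := by
        apply Finset.sum_le_sum
        intro s _
        rw [abs_mul, abs_of_nonneg (hT s)]
        exact mul_le_mul_of_nonneg_left (hinner s) (hT s)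
    _ = M := by rw [← Finset.sum_mul, hTs, one_mul]

lemma abs_sInf_sub_sInf_le_s13 {ι : Type*} {s : Set ι} (hs : s.Nonempty) (f g : ι → ℝ)
    (hfb : BddBelow (f '' s)) (hgb : BddBelow (g '' s)) {ε : ℝ}
    (h : ∀ x ∈ s, |f x - g x| ≤ ε) : |sInf (f '' s) - sInf (g '' s)| ≤ ε := by
  rw [abs_sub_le_iff]
  constructor
  · have key : sInf (f '' s) - ε ≤ sInf (g '' s) := by
      apply le_csInf (hs.image g)
      rintro y ⟨x, hx, rfl⟩
      have := csInf_le hfb (Set.mem_image_of_mem f hx)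
      have h2 := (abs_sub_le_iff.mp (h x hx)).1
      linarith
    linarith
  · have key : sInf (g '' s) - ε ≤ sInf (f '' s) := by
      apply le_csInf (hs.image f)
      rintro y ⟨x, hx, rfl⟩
      have := csInf_le hgb (Set.mem_image_of_mem g hx)
      have h2 := (abs_sub_le_iff.mp (h x hx)).2
      linarith
    linarith


/-- The node map sending a history `h : List O` to the controller node reached by
following the memory update `T_FSC` from the initial node `n₀`. -/
def nodeOfHistory {N O : Type*} (TFSC : N → O → N) (n₀ : N) (h : List O) : N :=
  List.foldl TFSC n₀ h

/-- The history-based robust Bellman operator. -/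
noncomputable def historyBellman {S N O A : Type*} [Fintype S] [Fintype O]
    (α : N → A) (TFSC : N → O → N) (n₀ : N) (T : S → A → S → ℝ) (R : S → A → ℝ)
    (γ : ℝ) (D : N → Set (S → O → ℝ)) (V : S × List O → ℝ) : S × List O → ℝ :=
  fun p =>
    R p.1 (α (nodeOfHistory TFSC n₀ p.2)) + γ * sInf
      ((fun Z => ∑ s', T p.1 (α (nodeOfHistory TFSC n₀ p.2)) s' *
          ∑ o, Z s' o * V (s', p.2 ++ [o])) '' D (nodeOfHistory TFSC n₀ p.2))

/-- Equivalence of history-dependent and node-dependent worst-case values, infinite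
horizon (Theorem 6.1, infinite-horizon part): a bounded fixed point of the history-based
robust Bellman operator agrees with any fixed point of the node-based robust Bellman
operator through the node map `n_h`. -/
theorem hist_eq_node_infinite_horizon {S N O A : Type*}
    [Fintype S] [Fintype N] [Fintype O] [Fintype A]
    (α : N → A) (TFSC : N → O → N) (n₀ : N) (T : S → A → S → ℝ)
    (hTnonneg : ∀ s a s', T s a s' ≥ 0) (hTsum : ∀ s a, ∑ s', T s a s' = 1)
    (R : S → A → ℝ) (γ : ℝ) (hγ0 : 0 ≤ γ) (hγ1 : γ < 1)
    (D : N → Set (S → O → ℝ)) (hDne : ∀ n, (D n).Nonempty)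
    (hDprob : ∀ n, ∀ Z ∈ D n, (∀ s' o, Z s' o ≥ 0) ∧ ∀ s', ∑ o, Z s' o = 1)
    (VhistInf : S × List O → ℝ) (hbdd : ∃ M : ℝ, ∀ p, |VhistInf p| ≤ M)
    (hfixh : historyBellman α TFSC n₀ T R γ D VhistInf = VhistInf)
    (VnodeInf : S × N → ℝ)
    (hfixn : nodeBellman α TFSC T R γ D VnodeInf = VnodeInf) :
    ∀ (s : S) (h : List O), VhistInf (s, h) = VnodeInf (s, nodeOfHistory TFSC n₀ h) := by
  intro s₀ h₀
  obtain ⟨M, hM⟩ := hbdd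
  obtain ⟨M₂, hM₂⟩ : ∃ M₂, ∀ q : S × N, |VnodeInf q| ≤ M₂ := by
    obtain ⟨M₂, hM₂⟩ := Finset.exists_le (Finset.univ.image fun q : S × N => |VnodeInf q|)
    exact ⟨M₂, fun q => hM₂ _ (Finset.mem_image_of_mem _ (Finset.mem_univ q))⟩
  set err : S × List O → ℝ :=
    fun p => |VhistInf p - VnodeInf (p.1, nodeOfHistory TFSC n₀ p.2)| with herr
  set E := sSup (Set.range err) with hE
  have hEbdd : BddAbove (Set.range err) := by
    refine ⟨M + M₂, ?_⟩
    rintro y ⟨p, rfl⟩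
    exact le_trans (abs_sub _ _) (add_le_add (hM p) (hM₂ _))
  have hkey : ∀ (s : S) (h : List O), err (s, h) ≤ γ * E := by
    intro s h
    have h1 := congrFun hfixh (s, h)
    have h2 := congrFun hfixn (s, nodeOfHistory TFSC n₀ h)
    simp only [historyBellman, nodeBellman] at h1 h2
    set n := nodeOfHistory TFSC n₀ h with hn
    show |VhistInf (s, h) - VnodeInf (s, n)| ≤ γ * E
    rw [← h1, ← h2]
    have hring : ∀ a b r : ℝ, (r + γ * a) - (r + γ * b) = γ * (a - b) := by
      intros; ring
    rw [hring, abs_mul, abs_of_nonneg hγ0]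
    apply mul_le_mul_of_nonneg_left _ hγ0
    apply abs_sInf_sub_sInf_le_s13 (hDne n)
    · refine ⟨-M, ?_⟩
      rintro y ⟨Z, hZ, rfl⟩
      have := weighted_abs_le (T s (α n)) (fun s' => hTnonneg s (α n) s')
        (hTsum s (α n)) Z (fun s' o => (hDprob n Z hZ).1 s' o) (hDprob n Z hZ).2
        (fun s' o => VhistInf (s', h ++ [o])) M (fun s' o => hM _)
      linarith [neg_abs_le (∑ s', T s (α n) s' * ∑ o, Z s' o * VhistInf (s', h ++ [o]))]
    · refine ⟨-M₂, ?_⟩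
      rintro y ⟨Z, hZ, rfl⟩
      have := weighted_abs_le (T s (α n)) (fun s' => hTnonneg s (α n) s')
        (hTsum s (α n)) Z (fun s' o => (hDprob n Z hZ).1 s' o) (hDprob n Z hZ).2
        (fun s' o => VnodeInf (s', TFSC n o)) M₂ (fun s' o => hM₂ _)
      linarith [neg_abs_le (∑ s', T s (α n) s' * ∑ o, Z s' o * VnodeInf (s', TFSC n o))]
    · intro Z hZ
      have hsplit : (∑ s', T s (α n) s' * ∑ o, Z s' o * VhistInf (s', h ++ [o])) -
          (∑ s', T s (α n) s' * ∑ o, Z s' o * VnodeInf (s', TFSC n o)) =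
          ∑ s', T s (α n) s' *
            ∑ o, Z s' o * (VhistInf (s', h ++ [o]) - VnodeInf (s', TFSC n o)) := by
        rw [← Finset.sum_sub_distrib]
        apply Finset.sum_congr rfl
        intro s' _
        rw [← mul_sub, ← Finset.sum_sub_distrib]
        congr 1
        apply Finset.sum_congr rfl
        intro o _
        ring
      rw [hsplit]
      apply weighted_abs_le (T s (α n)) (fun s' => hTnonneg s (α n) s')
        (hTsum s (α n)) Z (fun s' o => (hDprob n Z hZ).1 s' o) (hDprob n Z hZ).2
      intro s' o
      have hnode : nodeOfHistory TFSC n₀ (h ++ [o]) = TFSC n o := by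
        simp [nodeOfHistory, List.foldl_append, hn]
      have : |VhistInf (s', h ++ [o]) - VnodeInf (s', TFSC n o)| = err (s', h ++ [o]) := by
        simp [herr, hnode]
      rw [this]
      exact le_csSup hEbdd ⟨(s', h ++ [o]), rfl⟩
  have hE0 : 0 ≤ E := le_trans (abs_nonneg _) (le_csSup hEbdd ⟨(s₀, h₀), rfl⟩)
  have hEle : E ≤ γ * E := by
    apply Real.sSup_le _ (mul_nonneg hγ0 hE0)
    rintro y ⟨p, rfl⟩
    exact hkey p.1 p.2
  have hEzero : E = 0 := by nlinarith
  have hfin : err (s₀, h₀) ≤ 0 := hEzero ▸ le_csSup hEbdd ⟨(s₀, h₀), rfl⟩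
  have := abs_nonpos_iff.mp hfin
  linarith [this]
end
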